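/- arXiv:math/0501156 — 2 statements merged into one kernel-verified Lean document; each statement's English description precedes it below -/
import Mathlib

section
/- In Γ_N = S_N ⋉ Γ^N with N ≥ 2, all symplectic reflections of type (S), i.e. the elements s_{ij} γ_i γ_j^{-1} with i ≠ j and γ ∈ Γ, form a single conjugacy class of Γ_N. -/
noncomputable section

/-- The permutation action of `S_N` on `Γ^N`, as a homomorphism to the automorphism group. -/
def permAut (Γ : Type*) [Group Γ] (N : ℕ) :
    Equiv.Perm (Fin N) →* MulAut (Fin N → Γ) where
  toFun σ :=
    { toFun := fun f => f ∘ ⇑σ⁻¹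
      invFun := fun f => f ∘ ⇑σ
      left_inv := fun f => by funext i; simp
      right_inv := fun f => by funext i; simp
      map_mul' := fun f g => rfl }
  map_one' := by
    apply MulEquiv.ext; intro f; funext i; simp
  map_mul' σ τ := by
    apply MulEquiv.ext; intro f; funext i
    simp [mul_inv_rev, Equiv.Perm.mul_apply]

/-- The wreath product `Γ_N = S_N ⋉ Γ^N`. -/
def WreathProduct (Γ : Type*) [Group Γ] (N : ℕ) : Type _ :=
  SemidirectProduct (Fin N → Γ) (Equiv.Perm (Fin N)) (permAut Γ N)

instance (Γ : Type*) [Group Γ] (N : ℕ) : Group (WreathProduct Γ N) :=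
  SemidirectProduct.instGroup

/-- The symplectic reflection of type (S): the element `s_{ij} γ_i γ_j⁻¹` of `Γ_N`. -/
def typeS {Γ : Type*} [Group Γ] {N : ℕ} (i j : Fin N) (γ : Γ) : WreathProduct Γ N :=
  ⟨fun l => if l = i then γ else if l = j then γ⁻¹ else 1, Equiv.swap i j⟩

end

/-!
Conjugating `s_{ij} γ_i γ_j⁻¹` by a permutation `σ ∈ S_N` gives `s_{σi σj} γ_{σi} γ_{σj}⁻¹`, and
`S_N` is 2-transitive on indices, so any ordered pair `(i, j)` can be moved to any `(i', j')`.
Conjugating by the diagonal element `(γ' γ⁻¹)_i ∈ Γ^N` replaces `γ` by `γ'` while fixing `i, j`.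
-/

namespace WreathProduct

variable {Γ : Type*} [Group Γ] {N : ℕ}

theorem mk_mul_mk (f g : Fin N → Γ) (σ τ : Equiv.Perm (Fin N)) :
    (⟨f, σ⟩ * ⟨g, τ⟩ : WreathProduct Γ N) = ⟨f * g ∘ ⇑σ⁻¹, σ * τ⟩ := rfl

theorem isConj_typeS_perm (σ : Equiv.Perm (Fin N)) (i j : Fin N) (γ : Γ) :
    IsConj (typeS i j γ : WreathProduct Γ N) (typeS (σ i) (σ j) γ) := by
  refine isConj_iff.mpr ⟨⟨1, σ⟩, mul_inv_eq_of_eq_mul ?_⟩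
  simp only [typeS, mk_mul_mk, Equiv.swap_apply_apply, inv_mul_cancel_right]
  congr 1
  funext l
  simp [Equiv.symm_apply_eq]

theorem isConj_typeS_of_ne {i j : Fin N} (hij : i ≠ j) (γ γ' : Γ) :
    IsConj (typeS i j γ : WreathProduct Γ N) (typeS i j γ') := by
  refine isConj_iff.mpr ⟨⟨Pi.mulSingle i (γ' * γ⁻¹), 1⟩, mul_inv_eq_of_eq_mul ?_⟩
  simp only [typeS, mk_mul_mk]
  congr 1
  funext l
  rcases eq_or_ne l i with rfl | hli
  · simp [hij.symm]
  rcases eq_or_ne l j with rfl | hlj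
  · simp [hli]
  · simp [hli, hlj, Equiv.swap_apply_of_ne_of_ne hli hlj]

end WreathProduct

theorem typeS_single_conjugacy_class_general {N : ℕ}
    (Γ : Subgroup (Matrix.SpecialLinearGroup (Fin 2) ℂ))
    (i j i' j' : Fin N) (γ γ' : Γ) (hij : i ≠ j) (hij' : i' ≠ j') :
    IsConj (typeS i j γ) (typeS i' j' γ') := by
  obtain ⟨σ, hσi, hσj⟩ :=
    MulAction.is_two_pretransitive_iff.mp (Equiv.Perm.isMultiplyPretransitive _ 2) hij hij'
  have hmove : IsConj (typeS i j γ') (typeS i' j' γ') := by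
    simpa only [← hσi, ← hσj, Equiv.Perm.smul_def] using
      WreathProduct.isConj_typeS_perm σ i j γ'
  exact (WreathProduct.isConj_typeS_of_ne hij γ γ').trans hmove

/-- In `Γ_N = S_N ⋉ Γ^N` (`Γ` a finite subgroup of `SL(2,ℂ)`) with `N ≥ 2`, all symplectic
reflections of type (S), i.e. the elements `s_{ij} γ_i γ_j⁻¹` with `i ≠ j` and `γ ∈ Γ`,
form a single conjugacy class of `Γ_N`. -/
theorem typeS_single_conjugacy_class {N : ℕ} (hN : 2 ≤ N)
    (Γ : Subgroup (Matrix.SpecialLinearGroup (Fin 2) ℂ)) (hΓ : Finite Γ)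
    (i j i' j' : Fin N) (γ γ' : Γ) (hij : i ≠ j) (hij' : i' ≠ j') :
    IsConj (typeS i j γ) (typeS i' j' γ') :=
  typeS_single_conjugacy_class_general Γ i j i' j' γ γ' hij hij'
end

section
/- Let W_1 be the irreducible representation of S_{N_1} whose Young diagram is an l_1 × m_1 rectangle (N_1 = l_1 m_1), Y_1 a finite-dimensional Γ-representation, and j ∈ {2,...,N_1}. Then Tr_{W_1 ⊗ Y_1^{⊗N_1}}(s_{1j} γ_1 γ_j^{-1}) = ((m_1 - l_1)/(N_1 - 1)) · dim W_1 · (dim Y_1)^{N_1 - 1} for every γ ∈ Γ. -/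
open scoped TensorProduct
open Equiv

noncomputable section

/-- The row stabilizer of (the canonical tableau on) a Young diagram: permutations of the
cells preserving each row. -/
def rowGroup (μ : YoungDiagram) : Subgroup (Equiv.Perm μ.cells) where
  carrier := {σ | ∀ c : μ.cells, ((σ c : ℕ × ℕ)).1 = (c : ℕ × ℕ).1}
  one_mem' := fun _ => rfl
  mul_mem' := by
    intro σ τ hσ hτ c
    simp only [Equiv.Perm.mul_apply]
    rw [hσ, hτ]
  inv_mem' := by
    intro σ hσ c
    have := hσ (σ⁻¹ c)
    simpa using this.symm

/-- The column stabilizer: permutations of the cells preserving each column. -/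
def colGroup (μ : YoungDiagram) : Subgroup (Equiv.Perm μ.cells) where
  carrier := {σ | ∀ c : μ.cells, ((σ c : ℕ × ℕ)).2 = (c : ℕ × ℕ).2}
  one_mem' := fun _ => rfl
  mul_mem' := by
    intro σ τ hσ hτ c
    simp only [Equiv.Perm.mul_apply]
    rw [hσ, hτ]
  inv_mem' := by
    intro σ hσ c
    have := hσ (σ⁻¹ c)
    simpa using this.symm

open scoped Classical in
/-- The Young symmetrizer of (the canonical tableau on) a Young diagram `μ`, as an element
of the group algebra `ℂ[S_{cells μ}]`. -/
def youngSymmetrizer (μ : YoungDiagram) : MonoidAlgebra ℂ (Equiv.Perm μ.cells) :=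
  (∑ σ : rowGroup μ, MonoidAlgebra.single (σ : Equiv.Perm μ.cells) (1 : ℂ)) *
    (∑ σ : colGroup μ,
      MonoidAlgebra.single (σ : Equiv.Perm μ.cells)
        ((Equiv.Perm.sign (σ : Equiv.Perm μ.cells) : ℤ) : ℂ))

/-- The Specht module `π_μ`: the left ideal of the group algebra generated by the Young
symmetrizer, realizing the irreducible representation of the symmetric group attached
to the Young diagram `μ`. -/
def spechtIdeal (μ : YoungDiagram) :
    Submodule (MonoidAlgebra ℂ (Equiv.Perm μ.cells)) (MonoidAlgebra ℂ (Equiv.Perm μ.cells)) :=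
  Submodule.span _ {youngSymmetrizer μ}

/-- The Specht module viewed as a complex vector space. -/
def spechtSubspace (μ : YoungDiagram) : Submodule ℂ (MonoidAlgebra ℂ (Equiv.Perm μ.cells)) :=
  (spechtIdeal μ).restrictScalars ℂ

/-- The action of a permutation `g` on the Specht module, by left multiplication. -/
def spechtAction (μ : YoungDiagram) (g : Equiv.Perm μ.cells) :
    spechtSubspace μ →ₗ[ℂ] spechtSubspace μ where
  toFun x := ⟨MonoidAlgebra.single g (1 : ℂ) * x.1, by
    have h := (spechtIdeal μ).smul_mem (MonoidAlgebra.single g (1 : ℂ)) x.2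
    simpa [smul_eq_mul, spechtSubspace] using h⟩
  map_add' x y := Subtype.ext (by simp [mul_add])
  map_smul' a x := Subtype.ext (by simp [mul_smul_comm])

/-- The Specht module as a representation of the symmetric group on the cells of `μ`. -/
def spechtRep (μ : YoungDiagram) :
    Representation ℂ (Equiv.Perm μ.cells) (spechtSubspace μ) where
  toFun := spechtAction μ
  map_one' := by
    apply LinearMap.ext; intro x
    refine Subtype.ext ?_
    show MonoidAlgebra.single (1 : Equiv.Perm μ.cells) (1 : ℂ) * x.1 = x.1
    rw [← MonoidAlgebra.one_def, one_mul]
  map_mul' g h := by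
    apply LinearMap.ext; intro x
    refine Subtype.ext ?_
    show MonoidAlgebra.single (g * h) (1 : ℂ) * x.1 =
      MonoidAlgebra.single g (1 : ℂ) * (MonoidAlgebra.single h (1 : ℂ) * x.1)
    rw [← mul_assoc, MonoidAlgebra.single_mul_single, mul_one]

/-- The zero-sum subspace of functions on the cells of `μ`: the reflection representation. -/
def reflSubspace (μ : YoungDiagram) : Submodule ℂ (μ.cells → ℂ) where
  carrier := {f | ∑ c, f c = 0}
  add_mem' := by
    intro f g hf hg
    have hf' : ∑ c, f c = 0 := hf
    have hg' : ∑ c, g c = 0 := hg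
    show ∑ c, (f c + g c) = 0
    rw [Finset.sum_add_distrib, hf', hg', add_zero]
  zero_mem' := by simp
  smul_mem' := by
    intro a f hf
    have hf' : ∑ c, f c = 0 := hf
    show ∑ c, a * f c = 0
    rw [← Finset.mul_sum, hf', mul_zero]

/-- The reflection representation of the symmetric group on the cells of `μ`. -/
def reflRep (μ : YoungDiagram) :
    Representation ℂ (Equiv.Perm μ.cells) (reflSubspace μ) where
  toFun σ :=
    { toFun := fun f => ⟨fun c => f.1 (σ⁻¹ c), by
        have h : ∑ c, f.1 (σ⁻¹ c) = ∑ c, f.1 c := Equiv.sum_comp σ⁻¹ f.1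
        have h2 : ∑ c, f.1 c = 0 := f.2
        show ∑ c, f.1 (σ⁻¹ c) = 0
        rw [h, h2]⟩
      map_add' := fun f g => rfl
      map_smul' := fun a f => rfl }
  map_one' := by
    apply LinearMap.ext; intro f
    exact Subtype.ext (by simp)
  map_mul' g h := by
    apply LinearMap.ext; intro f
    exact Subtype.ext (by funext c; simp [Equiv.Perm.mul_apply])

/-- The space of `G`-equivariant linear maps between two representations. -/
def equivariantHoms {k G V W : Type*} [CommSemiring k] [Monoid G]
    [AddCommMonoid V] [Module k V] [AddCommMonoid W] [Module k W]
    (ρ : Representation k G V) (τ : Representation k G W) :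
    Submodule k (V →ₗ[k] W) where
  carrier := {f | ∀ g : G, f ∘ₗ ρ g = τ g ∘ₗ f}
  add_mem' := by
    intro f g hf hg x
    simp [LinearMap.add_comp, LinearMap.comp_add, hf x, hg x]
  zero_mem' := by intro g; simp
  smul_mem' := by
    intro a f hf g
    simp [LinearMap.smul_comp, LinearMap.comp_smul, hf g]

/-- The removable corners of a Young diagram: cells whose removal leaves a Young diagram. -/
def removableCorners (μ : YoungDiagram) : Finset (ℕ × ℕ) :=
  μ.cells.filter fun c => (c.1 + 1, c.2) ∉ μ ∧ (c.1, c.2 + 1) ∉ μ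

end

/-- Isomorphism of representations. -/
def RepIso {k G V W : Type*} [CommSemiring k] [Monoid G]
    [AddCommMonoid V] [Module k V] [AddCommMonoid W] [Module k W]
    (ρ : Representation k G V) (τ : Representation k G W) : Prop :=
  ∃ e : V ≃ₗ[k] W, ∀ (g : G) (v : V), e (ρ g v) = τ g (e v)

noncomputable section

open scoped TensorProduct

/-- The action of a wreath product element `(n, σ) ∈ S_ι ⋉ Γ^ι` on `W ⊗ Y^{⊗ι}`:
`σ` acts on `W` (through `ρW`) and permutes the tensor factors of `Y^{⊗ι}`, while
`n : ι → Γ` acts factorwise (through `ρY`). -/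
def wreathTensorAction {Γ W Y ι : Type*} [Group Γ]
    [AddCommGroup W] [Module ℂ W] [AddCommGroup Y] [Module ℂ Y]
    (ρW : Representation ℂ (Equiv.Perm ι) W) (ρY : Representation ℂ Γ Y)
    (n : ι → Γ) (σ : Equiv.Perm ι) :
    (W ⊗[ℂ] (⨂[ℂ] _l : ι, Y)) →ₗ[ℂ] (W ⊗[ℂ] (⨂[ℂ] _l : ι, Y)) :=
  TensorProduct.map (ρW σ)
    ((PiTensorProduct.map fun l => ρY (n l)) ∘ₗ
      (PiTensorProduct.reindex ℂ (fun _ : ι => Y) σ).toLinearMap)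

end

/-! The trace factors over `W ⊗ Y^{⊗N}`. On `Y^{⊗N}` the twisted transposition only couples the
two swapped factors, which contribute `Tr(ρ(γ) ρ(γ⁻¹)) = dim Y`, while each of the other `N - 2`
factors contributes `dim Y`.

On the Specht module `ℂ[S_N] c` (with `c` the Young symmetrizer) the key fact is `c² = κ c` with
`κ ≠ 0`: for a rectangle every `x` with `p x q = sgn(q) x` (`p` a row, `q` a column permutation)
is a multiple of `c`, because a permutation `g` either lies in `R C` or moves two cells of a row
into one column. Then `x ↦ κ⁻¹ g x c` is a projection onto the Specht module acting as `g`, so its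
character is `χ(g) = κ⁻¹ ∑_h c(h⁻¹ g h)`. The coefficient of `c` at a transposition of two cells is
`1`, `-1` or `0` as they share a row, a column, or neither; averaging over conjugates,
`χ(s)/χ(1)` is its mean over ordered pairs of distinct cells,
`(N (m - 1) - N (l - 1)) / (N (N - 1)) = (m - l)/(N - 1)`.
-/
open scoped Classical

theorem Equiv.forall_apply_swap_apply_eq_iff {α β : Type*} [DecidableEq α] (f : α → β) (x y : α) :
    (∀ c, f (swap x y c) = f c) ↔ f x = f y := by
  refine ⟨fun h => by simpa using (h x).symm, fun h c => ?_⟩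
  rw [swap_apply_def]
  split_ifs with hx hy
  · rw [hx, h]
  · rw [hy, h]
  · rfl

section YoungSymmetrizer

variable {μ : YoungDiagram}

lemma swap_mem_rowGroup_iff (x y : μ.cells) :
    swap x y ∈ rowGroup μ ↔ (x : ℕ × ℕ).1 = (y : ℕ × ℕ).1 :=
  Equiv.forall_apply_swap_apply_eq_iff (fun c : μ.cells => (c : ℕ × ℕ).1) x y

lemma swap_mem_colGroup_iff (x y : μ.cells) :
    swap x y ∈ colGroup μ ↔ (x : ℕ × ℕ).2 = (y : ℕ × ℕ).2 :=
  Equiv.forall_apply_swap_apply_eq_iff (fun c : μ.cells => (c : ℕ × ℕ).2) x y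

lemma eq_one_of_mem_rowGroup_of_mem_colGroup {p : Perm μ.cells} (hr : p ∈ rowGroup μ)
    (hc : p ∈ colGroup μ) : p = 1 :=
  Equiv.ext fun c => Subtype.ext (Prod.ext (hr c) (hc c))

lemma single_mul_youngSymmetrizer {p : Perm μ.cells} (hp : p ∈ rowGroup μ) :
    MonoidAlgebra.single p (1 : ℂ) * youngSymmetrizer μ = youngSymmetrizer μ := by
  rw [youngSymmetrizer, ← mul_assoc]
  congr 1
  simp only [Finset.mul_sum, MonoidAlgebra.single_mul_single, one_mul]
  exact Fintype.sum_equiv (Equiv.mulLeft (⟨p, hp⟩ : rowGroup μ)) _ _ fun σ => rfl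

lemma youngSymmetrizer_mul_single {q : Perm μ.cells} (hq : q ∈ colGroup μ) :
    youngSymmetrizer μ * MonoidAlgebra.single q (1 : ℂ) =
      ((Perm.sign q : ℤ) : ℂ) • youngSymmetrizer μ := by
  rw [youngSymmetrizer, mul_assoc, ← mul_smul_comm]
  congr 1
  simp only [Finset.sum_mul, Finset.smul_sum, MonoidAlgebra.single_mul_single, mul_one,
    MonoidAlgebra.smul_single, smul_eq_mul]
  refine Fintype.sum_equiv (Equiv.mulRight (⟨q, hq⟩ : colGroup μ)) _ _ fun σ => ?_
  simp only [Equiv.coe_mulRight, Subgroup.coe_mul, map_mul, Units.val_mul, Int.cast_mul]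
  congr 1
  rw [← mul_assoc, mul_comm ((Perm.sign q : ℤ) : ℂ), mul_assoc, ← Int.cast_mul,
    ← Units.val_mul, Int.units_mul_self, Units.val_one, Int.cast_one, mul_one]

variable (μ) in
def IsRowColSemiinvariant (x : MonoidAlgebra ℂ (Perm μ.cells)) : Prop :=
  ∀ p ∈ rowGroup μ, ∀ q ∈ colGroup μ,
    MonoidAlgebra.single p (1 : ℂ) * x * MonoidAlgebra.single q (1 : ℂ) =
      ((Perm.sign q : ℤ) : ℂ) • x

lemma isRowColSemiinvariant_youngSymmetrizer : IsRowColSemiinvariant μ (youngSymmetrizer μ) :=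
  fun _ hp _ hq => by rw [single_mul_youngSymmetrizer hp, youngSymmetrizer_mul_single hq]

lemma isRowColSemiinvariant_youngSymmetrizer_mul_self :
    IsRowColSemiinvariant μ (youngSymmetrizer μ * youngSymmetrizer μ) :=
  fun _ hp _ hq => by
    rw [← mul_assoc, single_mul_youngSymmetrizer hp, mul_assoc, youngSymmetrizer_mul_single hq,
      mul_smul_comm]

namespace IsRowColSemiinvariant

variable {x : MonoidAlgebra ℂ (Perm μ.cells)}

lemma coeff_eq_sign_mul_coeff (hx : IsRowColSemiinvariant μ x) {p q : Perm μ.cells}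
    (hp : p ∈ rowGroup μ) (hq : q ∈ colGroup μ) (g : Perm μ.cells) :
    x.coeff g = ((Perm.sign q : ℤ) : ℂ) * x.coeff (p * g * q) := by
  have h := congrArg (fun z => z.coeff (p * g * q)) (hx p hp q hq)
  simp only [MonoidAlgebra.coeff_smul_apply, smul_eq_mul, MonoidAlgebra.coeff_mul_single_apply,
    MonoidAlgebra.coeff_single_mul_apply, mul_one, one_mul] at h
  rwa [show p⁻¹ * (p * g * q * q⁻¹) = g by group] at h

/-- The transposition of `u` and `v` in a row is conjugate by `g` to a transposition in a
column, so the two semi-invariance relations force `x.coeff g = - x.coeff g`. -/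
lemma coeff_eq_zero (hx : IsRowColSemiinvariant μ x) {g : Perm μ.cells} {u v : μ.cells}
    (huv : u ≠ v) (hrow : (u : ℕ × ℕ).1 = (v : ℕ × ℕ).1)
    (hcol : ((g⁻¹ u : μ.cells) : ℕ × ℕ).2 = ((g⁻¹ v : μ.cells) : ℕ × ℕ).2) :
    x.coeff g = 0 := by
  have hconj : g⁻¹ * swap u v * g = swap (g⁻¹ u) (g⁻¹ v) := by
    rw [swap_apply_apply]; group
  have key := hx.coeff_eq_sign_mul_coeff ((swap_mem_rowGroup_iff u v).mpr hrow)
    (hconj ▸ (swap_mem_colGroup_iff _ _).mpr hcol) g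
  rw [show swap u v * g * (g⁻¹ * swap u v * g) = g by simp [mul_assoc], hconj,
    Perm.sign_swap (g⁻¹.injective.ne huv)] at key
  push_cast at key
  linear_combination key / 2

end IsRowColSemiinvariant

lemma youngSymmetrizer_coeff_one : (youngSymmetrizer μ).coeff 1 = 1 := by
  rw [youngSymmetrizer, Finset.sum_mul_sum]
  simp only [MonoidAlgebra.single_mul_single, one_mul, MonoidAlgebra.coeff_sum,
    MonoidAlgebra.coeff_single, Finset.sum_apply', Finsupp.single_apply]
  have inner : ∀ σ : rowGroup μ, σ ≠ 1 → (∑ τ : colGroup μ,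
      if (σ : Perm μ.cells) * τ = 1 then ((Perm.sign (τ : Perm μ.cells) : ℤ) : ℂ)
        else 0) = 0 := by
    intro σ hσ
    refine Finset.sum_eq_zero fun τ _ => if_neg fun h => hσ ?_
    have hτ : (τ : Perm μ.cells) = 1 := eq_one_of_mem_rowGroup_of_mem_colGroup
      (by rw [eq_inv_of_mul_eq_one_right h]; exact (rowGroup μ).inv_mem σ.2) τ.2
    rw [hτ, mul_one] at h
    exact Subtype.ext h
  rw [Finset.sum_eq_single_of_mem 1 (Finset.mem_univ _) fun σ _ => inner σ,
    Finset.sum_eq_single_of_mem 1 (Finset.mem_univ _) fun τ _ hτ => if_neg (by simpa using hτ)]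
  simp

lemma youngSymmetrizer_coeff_swap {x y : μ.cells} (hxy : x ≠ y) :
    (youngSymmetrizer μ).coeff (swap x y) =
      (if (x : ℕ × ℕ).1 = (y : ℕ × ℕ).1 then 1 else 0) -
        (if (x : ℕ × ℕ).2 = (y : ℕ × ℕ).2 then 1 else 0) := by
  have hc := isRowColSemiinvariant_youngSymmetrizer (μ := μ)
  by_cases hrow : (x : ℕ × ℕ).1 = (y : ℕ × ℕ).1
  · have hcol : (x : ℕ × ℕ).2 ≠ (y : ℕ × ℕ).2 := fun h => hxy (Subtype.ext (Prod.ext hrow h))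
    have := hc.coeff_eq_sign_mul_coeff ((swap_mem_rowGroup_iff x y).mpr hrow) (colGroup μ).one_mem 1
    simp_all [youngSymmetrizer_coeff_one]
  by_cases hcol : (x : ℕ × ℕ).2 = (y : ℕ × ℕ).2
  · have := hc.coeff_eq_sign_mul_coeff (rowGroup μ).one_mem ((swap_mem_colGroup_iff x y).mpr hcol) 1
    simp_all [Perm.sign_swap hxy, youngSymmetrizer_coeff_one]
  rw [if_neg hrow, if_neg hcol, sub_zero]
  wlog hle : (x : ℕ × ℕ).1 ≤ (y : ℕ × ℕ).1 generalizing x y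
  · rw [swap_comm]
    exact this hxy.symm (Ne.symm hrow) (Ne.symm hcol) (by omega)
  -- the cell in the row of `x` and the column of `y` witnesses the vanishing
  have hv : ((x : ℕ × ℕ).1, (y : ℕ × ℕ).2) ∈ μ := μ.up_left_mem hle le_rfl y.2
  have hvx : (⟨_, hv⟩ : μ.cells) ≠ x := fun h => hcol (by rw [← h])
  have hvy : (⟨_, hv⟩ : μ.cells) ≠ y := fun h => hrow (by rw [← h])
  refine hc.coeff_eq_zero hvx.symm rfl ?_
  rw [swap_inv, swap_apply_left, swap_apply_of_ne_of_ne hvx hvy]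

end YoungSymmetrizer

section Rectangle

variable {μ : YoungDiagram} {l m : ℕ}

lemma mem_range_product_of_mem_cells (hμ : μ.cells = Finset.range l ×ˢ Finset.range m)
    (u : μ.cells) : (u : ℕ × ℕ) ∈ Finset.range l ×ˢ Finset.range m :=
  hμ ▸ u.2

/-- On a rectangle, `u ↦ (row of u, column of g⁻¹ u)` is a permutation `P` of the cells
preserving rows, and `P * g` preserves columns. -/
lemma exists_mem_rowGroup_mem_colGroup_eq_mul (hμ : μ.cells = Finset.range l ×ˢ Finset.range m)
    {g : Perm μ.cells}
    (hg : ∀ u v : μ.cells, (u : ℕ × ℕ).1 = (v : ℕ × ℕ).1 →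
      ((g⁻¹ u : μ.cells) : ℕ × ℕ).2 = ((g⁻¹ v : μ.cells) : ℕ × ℕ).2 → u = v) :
    ∃ p ∈ rowGroup μ, ∃ q ∈ colGroup μ, g = p * q := by
  have hmem : ∀ u : μ.cells, ((u : ℕ × ℕ).1, ((g⁻¹ u : μ.cells) : ℕ × ℕ).2) ∈ μ.cells := by
    intro u
    have h : ((u : ℕ × ℕ).1, ((g⁻¹ u : μ.cells) : ℕ × ℕ).2) ∈ Finset.range l ×ˢ Finset.range m :=
      Finset.mem_product.mpr ⟨(Finset.mem_product.mp (mem_range_product_of_mem_cells hμ u)).1,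
        (Finset.mem_product.mp (mem_range_product_of_mem_cells hμ (g⁻¹ u))).2⟩
    rwa [← hμ] at h
  have hinj : Function.Injective fun u : μ.cells => (⟨_, hmem u⟩ : μ.cells) := fun u v h => by
    have h' := Subtype.ext_iff.mp h
    exact hg u v (congrArg Prod.fst h' :) (congrArg Prod.snd h' :)
  let P := Equiv.ofBijective _ (Finite.injective_iff_bijective.mp hinj)
  refine ⟨P⁻¹, (rowGroup μ).inv_mem fun c => rfl, P * g, fun c => ?_, by group⟩
  change ((g⁻¹ (g c) : μ.cells) : ℕ × ℕ).2 = _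
  simp

lemma IsRowColSemiinvariant.eq_smul_youngSymmetrizer
    (hμ : μ.cells = Finset.range l ×ˢ Finset.range m) {x : MonoidAlgebra ℂ (Perm μ.cells)}
    (hx : IsRowColSemiinvariant μ x) : x = x.coeff 1 • youngSymmetrizer μ := by
  have hc := isRowColSemiinvariant_youngSymmetrizer (μ := μ)
  refine MonoidAlgebra.coeff_injective (Finsupp.ext fun g => ?_)
  rw [MonoidAlgebra.coeff_smul_apply, smul_eq_mul]
  by_cases hg : ∃ u v : μ.cells, u ≠ v ∧ (u : ℕ × ℕ).1 = (v : ℕ × ℕ).1 ∧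
      ((g⁻¹ u : μ.cells) : ℕ × ℕ).2 = ((g⁻¹ v : μ.cells) : ℕ × ℕ).2
  · obtain ⟨u, v, huv, hrow, hcol⟩ := hg
    rw [hx.coeff_eq_zero huv hrow hcol, hc.coeff_eq_zero huv hrow hcol, mul_zero]
  obtain ⟨p, hp, q, hq, rfl⟩ := exists_mem_rowGroup_mem_colGroup_eq_mul hμ
    fun u v hrow hcol => by_contra fun huv => hg ⟨u, v, huv, hrow, hcol⟩
  have hpq : ∀ z, IsRowColSemiinvariant μ z →
      z.coeff (p * q) = ((Perm.sign q : ℤ) : ℂ) * z.coeff 1 := fun z hz => by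
    rw [hz.coeff_eq_sign_mul_coeff ((rowGroup μ).inv_mem hp) ((colGroup μ).inv_mem hq),
      Perm.sign_inv, show p⁻¹ * (p * q) * q⁻¹ = 1 by group]
  rw [hpq x hx, hpq _ hc, youngSymmetrizer_coeff_one]
  ring

end Rectangle

section GroupAlgebra

variable {k G : Type*} [CommRing k] [Group G] [Fintype G]

lemma trace_mulLeft_single_comp_mulRight (g : G) (c : MonoidAlgebra k G) :
    LinearMap.trace k _
        (LinearMap.mulLeft k (MonoidAlgebra.single g (1 : k)) ∘ₗ LinearMap.mulRight k c) =
      ∑ h : G, c.coeff (h⁻¹ * g⁻¹ * h) := by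
  rw [LinearMap.trace_eq_matrix_trace k (MonoidAlgebra.basis G k), Matrix.trace]
  refine Finset.sum_congr rfl fun h _ => ?_
  rw [Matrix.diag_apply, LinearMap.toMatrix_apply]
  change (MonoidAlgebra.single g (1 : k) * (MonoidAlgebra.single h 1 * c)).coeff h = _
  rw [MonoidAlgebra.coeff_single_mul_apply, MonoidAlgebra.coeff_single_mul_apply, one_mul,
    one_mul, ← mul_assoc]

lemma trace_mulRight (c : MonoidAlgebra k G) :
    LinearMap.trace k _ (LinearMap.mulRight k c) = Fintype.card G * c.coeff 1 := by
  have h := trace_mulLeft_single_comp_mulRight (1 : G) c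
  rw [← MonoidAlgebra.one_def, LinearMap.mulLeft_one, LinearMap.id_comp] at h
  simp [h]

end GroupAlgebra

section Specht

variable {μ : YoungDiagram} {l m : ℕ}

lemma youngSymmetrizer_mul_self (hμ : μ.cells = Finset.range l ×ˢ Finset.range m) :
    youngSymmetrizer μ * youngSymmetrizer μ =
      (youngSymmetrizer μ * youngSymmetrizer μ).coeff 1 • youngSymmetrizer μ :=
  isRowColSemiinvariant_youngSymmetrizer_mul_self.eq_smul_youngSymmetrizer hμ

/-- Otherwise right multiplication by the Young symmetrizer `c` would be nilpotent, but its
trace is `|S_N| • c.coeff 1 ≠ 0`. -/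
lemma youngSymmetrizer_mul_self_coeff_one_ne_zero
    (hμ : μ.cells = Finset.range l ×ˢ Finset.range m) :
    (youngSymmetrizer μ * youngSymmetrizer μ).coeff 1 ≠ 0 := by
  intro h0
  have hsq : youngSymmetrizer μ * youngSymmetrizer μ = 0 := by
    rw [youngSymmetrizer_mul_self hμ, h0, zero_smul]
  have hnil : IsNilpotent (LinearMap.mulRight ℂ (youngSymmetrizer μ)) :=
    ⟨2, LinearMap.ext fun x => by simp [pow_two, mul_assoc, hsq]⟩
  have htr := (LinearMap.isNilpotent_trace_of_isNilpotent hnil).eq_zero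
  rw [trace_mulRight, youngSymmetrizer_coeff_one] at htr
  simp at htr

lemma spechtSubspace_eq_range :
    spechtSubspace μ = LinearMap.range (LinearMap.mulRight ℂ (youngSymmetrizer μ)) := by
  ext x
  rw [spechtSubspace, Submodule.restrictScalars_mem, spechtIdeal, Submodule.mem_span_singleton]
  rfl

/-- `x ↦ κ⁻¹ g x c`, with `c² = κ c`, maps the group algebra into the Specht module and acts
there as `g`. -/
lemma trace_spechtRep (hμ : μ.cells = Finset.range l ×ˢ Finset.range m)
    (g : Perm μ.cells) :
    LinearMap.trace ℂ _ (spechtRep μ g) =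
      ((youngSymmetrizer μ * youngSymmetrizer μ).coeff 1)⁻¹ *
        ∑ h : Perm μ.cells, (youngSymmetrizer μ).coeff (h⁻¹ * g⁻¹ * h) := by
  set κ := (youngSymmetrizer μ * youngSymmetrizer μ).coeff 1
  set F := κ⁻¹ • (LinearMap.mulLeft ℂ (MonoidAlgebra.single g (1 : ℂ)) ∘ₗ
    LinearMap.mulRight ℂ (youngSymmetrizer μ))
  have hF : ∀ x, F x ∈ spechtSubspace μ := fun x => by
    rw [spechtSubspace_eq_range]
    exact ⟨κ⁻¹ • (MonoidAlgebra.single g 1 * x), by simp [F, mul_assoc]⟩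
  have hres : F.restrict (fun x _ => hF x) = spechtRep μ g := by
    ext ⟨v, hv⟩ : 1
    rw [spechtSubspace_eq_range] at hv
    obtain ⟨a, rfl⟩ := hv
    apply Subtype.ext
    change κ⁻¹ • (MonoidAlgebra.single g (1 : ℂ) * (a * youngSymmetrizer μ * youngSymmetrizer μ)) =
      MonoidAlgebra.single g (1 : ℂ) * (a * youngSymmetrizer μ)
    rw [mul_assoc a, youngSymmetrizer_mul_self hμ, mul_smul_comm, mul_smul_comm, smul_smul,
      inv_mul_cancel₀ (youngSymmetrizer_mul_self_coeff_one_ne_zero hμ), one_smul]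
  rw [← hres, LinearMap.trace_restrict_eq_of_forall_mem _ _ hF, map_smul,
    trace_mulLeft_single_comp_mulRight, smul_eq_mul]

lemma finrank_spechtSubspace (hμ : μ.cells = Finset.range l ×ˢ Finset.range m) :
    (Module.finrank ℂ (spechtSubspace μ) : ℂ) =
      ((youngSymmetrizer μ * youngSymmetrizer μ).coeff 1)⁻¹ * Fintype.card (Perm μ.cells) := by
  have h := trace_spechtRep hμ 1
  rw [map_one, LinearMap.trace_one] at h
  simp [h, youngSymmetrizer_coeff_one]

end Specht

section PermAverage

open Finset

variable {α : Type*} [DecidableEq α]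

lemma exists_perm_apply_eq_apply_eq {a b x y : α} (hab : a ≠ b) (hxy : x ≠ y) :
    ∃ σ : Perm α, σ a = x ∧ σ b = y := by
  refine ⟨swap (swap a x b) y * swap a x, ?_, ?_⟩
  · rw [Perm.mul_apply, swap_apply_left]
    refine swap_apply_of_ne_of_ne (fun h => hab ?_) hxy
    exact (swap a x).injective ((swap_apply_left a x).trans h)
  · rw [Perm.mul_apply, swap_apply_left]

variable [Fintype α] {M : Type*} [AddCommMonoid M]

lemma card_filter_perm_apply_eq_apply_eq {a b x y : α} (hab : a ≠ b) (hxy : x ≠ y) :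
    #{h : Perm α | h a = x ∧ h b = y} = #{h : Perm α | h a = a ∧ h b = b} := by
  obtain ⟨σ, rfl, rfl⟩ := exists_perm_apply_eq_apply_eq hab hxy
  symm
  refine Finset.card_equiv (Equiv.mulLeft σ) fun h => ?_
  simp [σ.apply_eq_iff_eq]

lemma sum_perm_apply_apply (F : α → α → M) {a b : α} (hab : a ≠ b) :
    ∑ h : Perm α, F (h a) (h b) =
      #{h : Perm α | h a = a ∧ h b = b} • ∑ p ∈ (univ : Finset α).offDiag, F p.1 p.2 := by
  rw [← sum_fiberwise_of_maps_to (g := fun h : Perm α => (h a, h b))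
    (t := univ.offDiag) fun h _ => by simpa using h.injective.ne hab, smul_sum]
  refine sum_congr rfl fun p hp => ?_
  rw [mem_offDiag] at hp
  rw [sum_congr (g := fun _ => F p.1 p.2) rfl fun h hh => by rw [← (mem_filter.mp hh).2],
    sum_const, ← card_filter_perm_apply_eq_apply_eq hab hp.2.2]
  simp only [Prod.ext_iff]

lemma card_offDiag_smul_sum_perm_apply_apply (F : α → α → M) {a b : α} (hab : a ≠ b) :
    #(univ : Finset α).offDiag • ∑ h : Perm α, F (h a) (h b) =
      Fintype.card (Perm α) • ∑ p ∈ (univ : Finset α).offDiag, F p.1 p.2 := by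
  have hcard := sum_perm_apply_apply (fun _ _ => (1 : ℕ)) hab
  simp only [sum_const, card_univ, smul_eq_mul, mul_one] at hcard
  rw [sum_perm_apply_apply F hab, hcard, smul_smul, mul_comm]

end PermAverage

section RectangleCharacter

open Finset

variable {μ : YoungDiagram} {l m : ℕ}

lemma card_cells_of_eq_range_product (hμ : μ.cells = range l ×ˢ range m) :
    Fintype.card μ.cells = l * m := by
  rw [Fintype.card_coe, hμ, card_product, card_range, card_range]

/-- Each cell shares its row with `m` cells and its column with `l` cells (itself included);
the diagonal contributes `1 - 1 = 0`. -/
lemma sum_offDiag_sameRow_sub_sameCol (hμ : μ.cells = range l ×ˢ range m) :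
    ∑ p ∈ (univ : Finset μ.cells).offDiag,
      ((if (p.1 : ℕ × ℕ).1 = (p.2 : ℕ × ℕ).1 then 1 else 0) -
        (if (p.1 : ℕ × ℕ).2 = (p.2 : ℕ × ℕ).2 then 1 else 0) : ℂ) = l * m * (m - l) := by
  rw [sum_subset (subset_univ _) fun p _ hp => by
    rw [(by simpa using hp : p.1 = p.2)]; simp, ← univ_product_univ, sum_product]
  have hx : ∀ x : μ.cells, x.1.1 < l ∧ x.1.2 < m := fun x => by
    simpa using mem_range_product_of_mem_cells hμ x
  have hrow : ∀ i < l, ∑ y : μ.cells, (if i = (y : ℕ × ℕ).1 then 1 else 0 : ℂ) = m := by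
    intro i hi
    rw [sum_coe_sort μ.cells (fun y : ℕ × ℕ => if i = y.1 then (1 : ℂ) else 0), hμ,
      sum_product_right]
    simp [hi]
  have hcol : ∀ j < m, ∑ y : μ.cells, (if j = (y : ℕ × ℕ).2 then 1 else 0 : ℂ) = l := by
    intro j hj
    rw [sum_coe_sort μ.cells (fun y : ℕ × ℕ => if j = y.2 then (1 : ℂ) else 0), hμ, sum_product]
    simp [hj]
  simp only [sum_sub_distrib, fun x : μ.cells => hrow _ (hx x).1,
    fun x : μ.cells => hcol _ (hx x).2,
    sum_const, card_univ, card_cells_of_eq_range_product hμ]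
  rw [nsmul_eq_mul, nsmul_eq_mul]
  push_cast
  ring

lemma trace_spechtRep_swap (hμ : μ.cells = range l ×ˢ range m) {a b : μ.cells}
    (hab : a ≠ b) :
    LinearMap.trace ℂ _ (spechtRep μ (swap a b)) =
      ((m : ℂ) - l) / ((l * m : ℂ) - 1) * Module.finrank ℂ (spechtSubspace μ) := by
  set F : μ.cells → μ.cells → ℂ := fun x y =>
    (if (x : ℕ × ℕ).1 = (y : ℕ × ℕ).1 then 1 else 0) -
      (if (x : ℕ × ℕ).2 = (y : ℕ × ℕ).2 then 1 else 0)
  have hconj : ∀ h : Perm μ.cells,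
      (youngSymmetrizer μ).coeff (h⁻¹ * (swap a b)⁻¹ * h) = F (h⁻¹ a) (h⁻¹ b) := fun h => by
    rw [swap_inv, show h⁻¹ * swap a b * h = swap (h⁻¹ a) (h⁻¹ b) by
      rw [swap_apply_apply]; group]
    exact youngSymmetrizer_coeff_swap (h⁻¹.injective.ne hab)
  have hsum : (#(univ : Finset μ.cells).offDiag : ℂ) * ∑ h : Perm μ.cells, F (h⁻¹ a) (h⁻¹ b) =
      Fintype.card (Perm μ.cells) * (l * m * (m - l)) := by
    rw [Fintype.sum_equiv (Equiv.inv (Perm μ.cells)) (fun h => F (h⁻¹ a) (h⁻¹ b))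
      (fun h => F (h a) (h b)) fun h => rfl, ← nsmul_eq_mul,
      card_offDiag_smul_sum_perm_apply_apply F hab, nsmul_eq_mul,
      sum_offDiag_sameRow_sub_sameCol hμ]
  have hN : 2 ≤ l * m := card_cells_of_eq_range_product hμ ▸ Fintype.one_lt_card_iff.mpr ⟨a, b, hab⟩
  have hoff : (#(univ : Finset μ.cells).offDiag : ℂ) = l * m * (l * m - 1) := by
    rw [offDiag_card, card_univ, card_cells_of_eq_range_product hμ,
      Nat.cast_sub (Nat.le_mul_self _)]
    push_cast
    ring
  have hN0 : (l * m : ℂ) ≠ 0 := by exact_mod_cast (by omega : l * m ≠ 0)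
  have hN1 : (l * m : ℂ) - 1 ≠ 0 := sub_ne_zero.mpr (by exact_mod_cast (by omega : l * m ≠ 1))
  have hS : ∑ h : Perm μ.cells, F (h⁻¹ a) (h⁻¹ b) =
      ((m : ℂ) - l) / (l * m - 1) * Fintype.card (Perm μ.cells) := by
    rw [div_mul_eq_mul_div, eq_div_iff hN1]
    refine mul_left_cancel₀ hN0 ?_
    rw [hoff] at hsum
    linear_combination hsum
  rw [trace_spechtRep hμ, finrank_spechtSubspace hμ, sum_congr rfl fun h _ => hconj h, hS]
  ring

end RectangleCharacter

section TensorPower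

open Finset

variable {ι κ : Type*} [Fintype ι] [DecidableEq ι] [Fintype κ] [DecidableEq κ]

lemma card_filter_apply_eq_apply_eq {a b : ι} (hab : a ≠ b) (x y : κ) :
    #{f : ι → κ | f a = x ∧ f b = y} = Fintype.card κ ^ (Fintype.card ι - 2) := by
  set s : ∀ _ : ι, Finset κ := Function.update (fun _ => univ) a {x}
  have hs : ({f : ι → κ | f a = x ∧ f b = y} : Finset (ι → κ)) =
      {f ∈ Fintype.piFinset s | f b = y} := by
    ext f
    simp only [mem_filter, mem_univ, true_and, Fintype.mem_piFinset, s]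
    refine and_congr_left' ⟨fun h i => ?_, fun h => by simpa using h a⟩
    rcases eq_or_ne i a with rfl | hi <;> simp [*]
  rw [hs, Fintype.card_filter_piFinset_eq_of_mem s b (by simp [s, hab.symm]),
    ← mul_prod_erase _ _ (mem_erase.mpr ⟨hab, mem_univ a⟩),
    prod_congr (g := fun _ => Fintype.card κ) rfl fun j hj => by
      simp only [mem_erase] at hj
      simp only [s, Function.update_of_ne hj.1, card_univ]]
  rw [prod_const, card_erase_of_mem (mem_erase.mpr ⟨hab, mem_univ a⟩),
    card_erase_of_mem (mem_univ b), card_univ, Nat.sub_sub]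
  simp [s]

lemma sum_pi_apply_apply {M : Type*} [AddCommMonoid M] (G : κ → κ → M) {a b : ι} (hab : a ≠ b) :
    ∑ f : ι → κ, G (f a) (f b) =
      Fintype.card κ ^ (Fintype.card ι - 2) • ∑ x : κ, ∑ y : κ, G x y := by
  rw [← sum_fiberwise (g := fun f : ι → κ => (f a, f b)), Fintype.sum_prod_type, smul_sum]
  refine sum_congr rfl fun x _ => ?_
  rw [smul_sum]
  refine sum_congr rfl fun y _ => ?_
  rw [sum_congr (g := fun _ => G x y) rfl fun f hf => by
    obtain ⟨h1, h2⟩ := Prod.mk.inj (mem_filter.mp hf).2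
    rw [h1, h2], sum_const, ← card_filter_apply_eq_apply_eq hab x y]
  simp only [Prod.mk.injEq]

end TensorPower

section TensorPowerTrace

open Finset

variable {ι : Type*} [Fintype ι] [DecidableEq ι]
variable {R Y : Type*} [CommRing R] [StrongRankCondition R] [AddCommGroup Y] [Module R Y]
  [Module.Free R Y] [Module.Finite R Y]

lemma trace_map_comp_reindex_swap (A B : Module.End R Y) {a b : ι} (hab : a ≠ b) :
    LinearMap.trace R _
        ((PiTensorProduct.map fun i => if i = a then A else if i = b then B else 1) ∘ₗ
          (PiTensorProduct.reindex R (fun _ : ι => Y) (swap a b)).toLinearMap) =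
      LinearMap.trace R Y (A * B) * Module.finrank R Y ^ (Fintype.card ι - 2) := by
  set Φ := (PiTensorProduct.map fun i => if i = a then A else if i = b then B else 1) ∘ₗ
    (PiTensorProduct.reindex R (fun _ : ι => Y) (swap a b)).toLinearMap
  set e := Module.Free.chooseBasis R Y
  set E := Basis.piTensorProduct fun _ : ι => e
  set M := LinearMap.toMatrix e e
  have hdiag : ∀ f, LinearMap.toMatrix E E Φ f f = M A (f a) (f b) * M B (f b) (f a) := by
    intro f
    rw [LinearMap.toMatrix_apply, Basis.piTensorProduct_apply, LinearMap.comp_apply,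
      LinearEquiv.coe_coe, PiTensorProduct.reindex_tprod, PiTensorProduct.map_tprod,
      Basis.piTensorProduct_repr_tprod_apply,
      ← prod_subset (subset_univ {a, b}) fun i _ hi => ?_, prod_pair hab]
    · simp [M, LinearMap.toMatrix_apply, hab.symm]
    · simp only [mem_insert, mem_singleton, not_or] at hi
      simp [hi.1, hi.2, swap_apply_of_ne_of_ne]
  rw [LinearMap.trace_eq_matrix_trace R E, LinearMap.trace_eq_matrix_trace R e,
    LinearMap.toMatrix_mul, Matrix.trace]
  simp only [Matrix.diag_apply, hdiag]
  rw [sum_pi_apply_apply (fun x y => M A x y * M B y x) hab, nsmul_eq_mul, mul_comm,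
    Module.finrank_eq_card_chooseBasisIndex, Nat.cast_pow]
  simp only [Matrix.trace, Matrix.diag_apply, Matrix.mul_apply, M]

lemma trace_map_rep_inv_comp_reindex_swap {Γ : Type*} [Group Γ] (ρ : Representation R Γ Y)
    (γ : Γ) {a b : ι} (hab : a ≠ b) :
    LinearMap.trace R _
        ((PiTensorProduct.map fun i => ρ (if i = a then γ else if i = b then γ⁻¹ else 1)) ∘ₗ
          (PiTensorProduct.reindex R (fun _ : ι => Y) (swap a b)).toLinearMap) =
      Module.finrank R Y ^ (Fintype.card ι - 1) := by
  simp only [apply_ite ρ, map_one]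
  rw [trace_map_comp_reindex_swap _ _ hab, ← map_mul, mul_inv_cancel, map_one,
    LinearMap.trace_one, ← pow_succ']
  have := Fintype.one_lt_card_iff.mpr ⟨a, b, hab⟩
  congr 1
  omega

end TensorPowerTrace

lemma RepIso.trace_eq {k G V W : Type*} [CommRing k] [Monoid G] [AddCommGroup V] [Module k V]
    [AddCommGroup W] [Module k W] {ρ : Representation k G V} {τ : Representation k G W}
    (h : RepIso ρ τ) (g : G) : LinearMap.trace k V (ρ g) = LinearMap.trace k W (τ g) := by
  obtain ⟨e, he⟩ := h
  rw [← LinearMap.trace_conj' (ρ g) e]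
  congr 1
  ext w
  simp [LinearEquiv.conj_apply, he]

open scoped Classical in
theorem trace_swap_rectangle_wreath_general (μ : YoungDiagram) (l₁ m₁ : ℕ)
    (hμ : μ.cells = Finset.range l₁ ×ˢ Finset.range m₁)
    {Γ : Type*} [Group Γ]
    {W Y : Type} [AddCommGroup W] [Module ℂ W] [FiniteDimensional ℂ W]
    [AddCommGroup Y] [Module ℂ Y] [FiniteDimensional ℂ Y]
    (ρW : Representation ℂ (Equiv.Perm μ.cells) W) (hW : RepIso ρW (spechtRep μ))
    (ρY : Representation ℂ Γ Y)
    (a b : μ.cells) (hab : a ≠ b) (γ : Γ) :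
    LinearMap.trace ℂ _
        (wreathTensorAction ρW ρY
          (fun l => if l = a then γ else if l = b then γ⁻¹ else 1) (Equiv.swap a b)) =
      (((m₁ : ℂ) - (l₁ : ℂ)) / ((l₁ * m₁ : ℂ) - 1)) * (Module.finrank ℂ W : ℂ) *
        (Module.finrank ℂ Y : ℂ) ^ (l₁ * m₁ - 1) := by
  rw [wreathTensorAction, LinearMap.trace_tensorProduct', hW.trace_eq,
    trace_spechtRep_swap hμ hab, trace_map_rep_inv_comp_reindex_swap ρY γ hab,
    card_cells_of_eq_range_product hμ]
  obtain ⟨e, -⟩ := hW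
  rw [e.finrank_eq]

open scoped Classical in
/-- Let `W₁` be the irreducible representation of `S_{N₁}` whose Young diagram is an
`l₁ × m₁` rectangle (`N₁ = l₁ m₁`), `Y₁` a finite-dimensional `Γ`-representation, and
`s_{1j}` a transposition (here `Equiv.swap a b` of two distinct cells). Then
`Tr_{W₁ ⊗ Y₁^{⊗N₁}}(s_{1j} γ_1 γ_j⁻¹)
  = ((m₁ - l₁)/(N₁ - 1)) · dim W₁ · (dim Y₁)^{N₁ - 1}` for every `γ ∈ Γ`, where
`S_{N₁}` acts on `W₁` and simultaneously permutes the tensor factors of `Y₁^{⊗N₁}` and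
`Γ^{N₁}` acts factorwise. -/
theorem trace_swap_rectangle_wreath (μ : YoungDiagram) (l₁ m₁ : ℕ)
    (hμ : μ.cells = Finset.range l₁ ×ˢ Finset.range m₁)
    {Γ : Type*} [Group Γ] [Finite Γ]
    {W Y : Type} [AddCommGroup W] [Module ℂ W] [FiniteDimensional ℂ W]
    [AddCommGroup Y] [Module ℂ Y] [FiniteDimensional ℂ Y]
    (ρW : Representation ℂ (Equiv.Perm μ.cells) W) (hW : RepIso ρW (spechtRep μ))
    (ρY : Representation ℂ Γ Y)
    (a b : μ.cells) (hab : a ≠ b) (γ : Γ) :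
    LinearMap.trace ℂ _
        (wreathTensorAction ρW ρY
          (fun l => if l = a then γ else if l = b then γ⁻¹ else 1) (Equiv.swap a b)) =
      (((m₁ : ℂ) - (l₁ : ℂ)) / ((l₁ * m₁ : ℂ) - 1)) * (Module.finrank ℂ W : ℂ) *
        (Module.finrank ℂ Y : ℂ) ^ (l₁ * m₁ - 1) :=
  trace_swap_rectangle_wreath_general μ l₁ m₁ hμ ρW hW ρY a b hab γ
end
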